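/- Suppose K is the cubic form on R^3_1 with LVB coefficients all zero except b_7 ≠ 0, so that K(X,X) = b_7 z² e for X = x e + y v + z f. Then any M ∈ SO(1,2) preserving K fixes the lightlike vector e: M(e) = e. -/

import Mathlib

/-!
Since `⟨K(X,Y),Z⟩ = b₇ ⟨X,e⟩⟨Y,e⟩⟨Z,e⟩`, preserving `K` means `⟨MX,e⟩³ = ⟨X,e⟩³`, and as real
cube roots are unique, `M` preserves the functional `⟨·,e⟩`, i.e. the `f`-coordinate. Then `Me`
has no `f`-component, is null (so its `v`-component vanishes) and pairs to `1` with `Mf`, whose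
`f`-component is `1`; this leaves `Me = e`.
-/

open Matrix

/-- Inner product of `ℝ³₁` in a light-vector basis `{e,v,f}`. -/
def ipL (x y : Fin 3 → ℝ) : ℝ := x 0 * y 2 + x 2 * y 0 + x 1 * y 1

/-- The cubic form with `K(X,Y) = b₇ x_f y_f e` (only LVB coefficient `b₇`). -/
def Kb7 (b7 : ℝ) (X Y : Fin 3 → ℝ) : Fin 3 → ℝ := (b7 * X 2 * Y 2) • ![1, 0, 0]

lemma ipL_Kb7 (b7 : ℝ) (X Y Z : Fin 3 → ℝ) :
    ipL (Kb7 b7 X Y) Z = b7 * X 2 * Y 2 * Z 2 := by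
  simp [ipL, Kb7]

lemma mulVec_apply_two_eq_of_preserves_Kb7 {b7 : ℝ} (hb7 : b7 ≠ 0)
    {M : Matrix (Fin 3) (Fin 3) ℝ}
    (hK : ∀ X Y Z : Fin 3 → ℝ,
      ipL (Kb7 b7 (M *ᵥ X) (M *ᵥ Y)) (M *ᵥ Z) = ipL (Kb7 b7 X Y) Z)
    (X : Fin 3 → ℝ) : (M *ᵥ X) 2 = X 2 := by
  have hcube : b7 * (M *ᵥ X) 2 ^ 3 = b7 * X 2 ^ 3 := by
    have := hK X X X
    simp only [ipL_Kb7] at this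
    linear_combination this
  exact (Odd.pow_inj (by decide)).mp (mul_left_cancel₀ hb7 hcube)

lemma mulVec_e_eq_e_of_isometry {M : Matrix (Fin 3) (Fin 3) ℝ}
    (hiso : ∀ x y : Fin 3 → ℝ, ipL (M *ᵥ x) (M *ᵥ y) = ipL x y)
    (hf : ∀ X : Fin 3 → ℝ, (M *ᵥ X) 2 = X 2) :
    M *ᵥ ![1, 0, 0] = ![1, 0, 0] := by
  have hu2 : (M *ᵥ ![1, 0, 0]) 2 = 0 := by simpa using hf ![1, 0, 0]
  have hMf2 : (M *ᵥ ![0, 0, 1]) 2 = 1 := by simpa using hf ![0, 0, 1]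
  have hu1 : (M *ᵥ ![1, 0, 0]) 1 = 0 := by
    simpa [ipL, hu2] using hiso ![1, 0, 0] ![1, 0, 0]
  have hu0 : (M *ᵥ ![1, 0, 0]) 0 = 1 := by
    simpa [ipL, hu1, hu2, hMf2] using hiso ![1, 0, 0] ![0, 0, 1]
  ext i
  fin_cases i <;> simp [hu0, hu1, hu2]

theorem stmt10_general (b7 : ℝ) (hb7 : b7 ≠ 0) (M : Matrix (Fin 3) (Fin 3) ℝ)
    (hiso : ∀ x y : Fin 3 → ℝ, ipL (M.mulVec x) (M.mulVec y) = ipL x y)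
    (hK : ∀ X Y Z : Fin 3 → ℝ,
      ipL (Kb7 b7 (M.mulVec X) (M.mulVec Y)) (M.mulVec Z) = ipL (Kb7 b7 X Y) Z) :
    M.mulVec ![1, 0, 0] = ![1, 0, 0] :=
  mulVec_e_eq_e_of_isometry hiso (mulVec_apply_two_eq_of_preserves_Kb7 hb7 hK)

/-- If `K` is the cubic form on `ℝ³₁` whose only nonvanishing LVB coefficient
is `b₇ ≠ 0` (so `K(X,X) = b₇ z² e`), then any `M ∈ SO(1,2)` preserving `K`
fixes the lightlike basis vector `e`. -/
theorem stmt10 (b7 : ℝ) (hb7 : b7 ≠ 0) (M : Matrix (Fin 3) (Fin 3) ℝ)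
    (hiso : ∀ x y : Fin 3 → ℝ, ipL (M.mulVec x) (M.mulVec y) = ipL x y)
    (hdet : M.det = 1)
    (hK : ∀ X Y Z : Fin 3 → ℝ,
      ipL (Kb7 b7 (M.mulVec X) (M.mulVec Y)) (M.mulVec Z) = ipL (Kb7 b7 X Y) Z) :
    M.mulVec ![1, 0, 0] = ![1, 0, 0] :=
  stmt10_general b7 hb7 M hiso hK
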